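/- Let c > 0 and x ∈ X, and suppose y ∈ X minimizes the function z ↦ (z − x)ᵀ(Q_d + cI)(z − x) + (z − x)ᵀ(2Qx + q) over X. Then f(y) ≤ f(x) − (c − λ_max(Q))‖y − x‖². In particular, if c > λ_max(Q) then f(y) ≤ f(x). -/

import Mathlib

/-!
Write `d = y - x` and `g = 2Qx + q`. Expanding the quadratic, `f(y) - f(x) = dᵀQd + dᵀg`.
Comparing the minimizer `y` with the feasible point `x` (whose model value is `0`) gives
`dᵀ(Q_d + cI)d + dᵀg ≤ 0`. Since `Q_d` is a sum of principal blocks of the positive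
semidefinite `Q`, `dᵀQ_d d ≥ 0`; and `dᵀQd ≤ λ_max(Q)‖d‖²` by diagonalizing `Q`.
Adding these up gives `f(y) - f(x) ≤ (λ_max(Q) - c)‖d‖²`.
-/

open Matrix Filter Topology
open scoped RealInnerProductSpace

noncomputable section

/-- The product decision space of `m` agents, agent `i` having an `n i`-dimensional
Euclidean decision vector; equipped with the (ℓ²-of-ℓ²) Euclidean norm. -/
abbrev JVec (m : ℕ) (n : Fin m → ℕ) :=
  PiLp 2 (fun i : Fin m => EuclideanSpace ℝ (Fin (n i)))

/-- `upd x i z` is the vector `(z, x^{-i})`: `x` with its `i`-th block replaced by `z`. -/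
def upd {m : ℕ} {n : Fin m → ℕ} (x : JVec m n) (i : Fin m)
    (z : EuclideanSpace ℝ (Fin (n i))) : JVec m n :=
  WithLp.toLp 2 (Function.update x i z)
/-- The index set of the stacked vector `x = (x^1, …, x^m)`. -/
abbrev JIdx (m : ℕ) (n : Fin m → ℕ) := Σ i : Fin m, Fin (n i)

/-- Flatten a block vector into a plain vector indexed by `JIdx m n`. -/
def flat {m : ℕ} {n : Fin m → ℕ} (x : JVec m n) : JIdx m n → ℝ :=
  fun p => x p.1 p.2

/-- The block-diagonal part `Q_d` of `Q`: equal to `Q` on entries whose row and column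
indices lie in the same agent block, and zero elsewhere. -/
def blockDiagPart {m : ℕ} {n : Fin m → ℕ} (Q : Matrix (JIdx m n) (JIdx m n) ℝ) :
    Matrix (JIdx m n) (JIdx m n) ℝ :=
  Matrix.of fun p q => if p.1 = q.1 then Q p q else 0

/-- The quadratic objective `f(x) = xᵀ Q x + qᵀ x`. -/
def quadF {m : ℕ} {n : Fin m → ℕ} (Q : Matrix (JIdx m n) (JIdx m n) ℝ)
    (q : JIdx m n → ℝ) (x : JVec m n) : ℝ :=
  flat x ⬝ᵥ (Q *ᵥ flat x) + q ⬝ᵥ flat x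

/-- The largest eigenvalue of a real symmetric (Hermitian) matrix. -/
noncomputable def maxEig {ι : Type*} [Fintype ι] [DecidableEq ι]
    {A : Matrix ι ι ℝ} (hA : A.IsHermitian) : ℝ :=
  ⨆ p, hA.eigenvalues p

theorem Matrix.transpose_mulVec_dotProduct_self_of_mem_unitaryGroup {ι : Type*} [Fintype ι]
    [DecidableEq ι] {U : Matrix ι ι ℝ} (hU : U ∈ unitaryGroup ι ℝ) (d : ι → ℝ) :
    (Uᵀ *ᵥ d) ⬝ᵥ (Uᵀ *ᵥ d) = d ⬝ᵥ d := by
  rw [mulVec_transpose, ← dotProduct_mulVec, ← mulVec_transpose, mulVec_mulVec,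
    ← conjTranspose_eq_transpose_of_trivial, ← star_eq_conjTranspose,
    mem_unitaryGroup_iff.mp hU, one_mulVec]

namespace Matrix.IsHermitian

variable {ι : Type*} [Fintype ι] [DecidableEq ι] {A : Matrix ι ι ℝ}

theorem dotProduct_mulVec_eq_sum_eigenvalues (hA : A.IsHermitian) (d : ι → ℝ) :
    d ⬝ᵥ (A *ᵥ d)
      = ∑ p, hA.eigenvalues p * ((hA.eigenvectorUnitary : Matrix ι ι ℝ)ᵀ *ᵥ d) p ^ 2 := by
  set U : Matrix ι ι ℝ := ↑hA.eigenvectorUnitary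
  have hstar : star U = Uᵀ := conjTranspose_eq_transpose_of_trivial U
  conv_lhs => rw [hA.spectral_theorem, Unitary.conjStarAlgAut_apply]
  rw [← mulVec_mulVec, ← mulVec_mulVec, dotProduct_mulVec, ← mulVec_transpose, hstar]
  simp [U, dotProduct, mulVec_diagonal, sq, mul_left_comm]

theorem dotProduct_mulVec_le_maxEig_mul (hA : A.IsHermitian) (d : ι → ℝ) :
    d ⬝ᵥ (A *ᵥ d) ≤ maxEig hA * (d ⬝ᵥ d) := by
  set w := (hA.eigenvectorUnitary : Matrix ι ι ℝ)ᵀ *ᵥ d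
  have hle (p : ι) : hA.eigenvalues p ≤ maxEig hA :=
    le_ciSup (Set.finite_range _).bddAbove p
  calc d ⬝ᵥ (A *ᵥ d) = ∑ p, hA.eigenvalues p * w p ^ 2 :=
        hA.dotProduct_mulVec_eq_sum_eigenvalues d
    _ ≤ ∑ p, maxEig hA * w p ^ 2 :=
        Finset.sum_le_sum fun p _ => mul_le_mul_of_nonneg_right (hle p) (sq_nonneg _)
    _ = maxEig hA * (d ⬝ᵥ d) := by
        rw [← Finset.mul_sum, ← transpose_mulVec_dotProduct_self_of_mem_unitaryGroup
          hA.eigenvectorUnitary.2 d]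
        simp only [dotProduct, sq, w]

end Matrix.IsHermitian

section Blocks

variable {m : ℕ} {n : Fin m → ℕ}

def blockRestrict (d : JIdx m n → ℝ) (i : Fin m) : JIdx m n → ℝ :=
  fun p => if p.1 = i then d p else 0

theorem dotProduct_blockDiagPart_mulVec (Q : Matrix (JIdx m n) (JIdx m n) ℝ)
    (d : JIdx m n → ℝ) :
    d ⬝ᵥ (blockDiagPart Q *ᵥ d) = ∑ i, blockRestrict d i ⬝ᵥ (Q *ᵥ blockRestrict d i) := by
  simp only [dotProduct, mulVec, blockDiagPart, blockRestrict, Matrix.of_apply]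
  rw [Finset.sum_comm]
  refine Finset.sum_congr rfl fun p _ => ?_
  simp only [ite_mul, zero_mul, Finset.sum_ite_eq, Finset.mem_univ, if_true]
  rw [Finset.mul_sum, Finset.mul_sum]
  refine Finset.sum_congr rfl fun r _ => ?_
  rcases eq_or_ne p.1 r.1 with h | h
  · rw [if_pos h, if_pos h.symm]
  · rw [if_neg h, if_neg (Ne.symm h)]; ring

theorem Matrix.PosSemidef.dotProduct_blockDiagPart_mulVec_nonneg
    {Q : Matrix (JIdx m n) (JIdx m n) ℝ} (hQ : Q.PosSemidef) (d : JIdx m n → ℝ) :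
    0 ≤ d ⬝ᵥ (blockDiagPart Q *ᵥ d) := by
  rw [dotProduct_blockDiagPart_mulVec]
  exact Finset.sum_nonneg fun i _ => by
    simpa using hQ.dotProduct_mulVec_nonneg (blockRestrict d i)

theorem flat_sub (x y : JVec m n) : flat (y - x) = flat y - flat x := rfl

theorem norm_sq_eq_flat_dotProduct (v : JVec m n) : ‖v‖ ^ 2 = flat v ⬝ᵥ flat v := by
  have hblock (i : Fin m) : ‖v i‖ ^ 2 = ∑ j, v i j * v i j := by
    rw [EuclideanSpace.norm_sq_eq]
    simp [sq]
  simp only [PiLp.norm_sq_eq_of_L2, hblock, dotProduct, flat]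
  rw [← Finset.univ_sigma_univ, Finset.sum_sigma]

end Blocks

theorem Matrix.dotProduct_add_mulVec_add_of_transpose_eq {ι : Type*} [Fintype ι]
    {Q : Matrix ι ι ℝ} (hQ : Qᵀ = Q) (q u d : ι → ℝ) :
    (u + d) ⬝ᵥ (Q *ᵥ (u + d)) + q ⬝ᵥ (u + d)
      = u ⬝ᵥ (Q *ᵥ u) + q ⬝ᵥ u + (d ⬝ᵥ (Q *ᵥ d) + d ⬝ᵥ ((2 : ℝ) • (Q *ᵥ u) + q)) := by
  have hsymm : u ⬝ᵥ (Q *ᵥ d) = d ⬝ᵥ (Q *ᵥ u) := by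
    rw [dotProduct_mulVec, ← mulVec_transpose, hQ, dotProduct_comm]
  simp only [mulVec_add, dotProduct_add, add_dotProduct, dotProduct_smul, smul_eq_mul, hsymm,
    dotProduct_comm q]
  ring

theorem quadF_le_sub_of_proximal_nonpos {m : ℕ} {n : Fin m → ℕ}
    {Q : Matrix (JIdx m n) (JIdx m n) ℝ} (hQ : Q.PosSemidef) (q : JIdx m n → ℝ) (c : ℝ)
    (x y : JVec m n)
    (hprox : (flat y - flat x) ⬝ᵥ ((blockDiagPart Q + c • (1 : Matrix (JIdx m n) (JIdx m n) ℝ))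
          *ᵥ (flat y - flat x))
        + (flat y - flat x) ⬝ᵥ ((2 : ℝ) • (Q *ᵥ flat x) + q) ≤ 0) :
    quadF Q q y ≤ quadF Q q x - (c - maxEig hQ.1) * ‖y - x‖ ^ 2 := by
  set d := flat y - flat x
  have hexpand : quadF Q q y
      = quadF Q q x + (d ⬝ᵥ (Q *ᵥ d) + d ⬝ᵥ ((2 : ℝ) • (Q *ᵥ flat x) + q)) := by
    rw [quadF, quadF, (add_sub_cancel (flat x) (flat y)).symm,
      dotProduct_add_mulVec_add_of_transpose_eq
      ((conjTranspose_eq_transpose_of_trivial Q).symm.trans hQ.1)]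
  have hprox' : d ⬝ᵥ (blockDiagPart Q *ᵥ d) + c * (d ⬝ᵥ d)
      + d ⬝ᵥ ((2 : ℝ) • (Q *ᵥ flat x) + q) ≤ 0 := by
    simpa only [add_mulVec, dotProduct_add, smul_mulVec, one_mulVec, dotProduct_smul,
      smul_eq_mul] using hprox
  have hray := hQ.1.dotProduct_mulVec_le_maxEig_mul d
  have hQd := hQ.dotProduct_blockDiagPart_mulVec_nonneg d
  rw [hexpand, norm_sq_eq_flat_dotProduct, flat_sub]
  nlinarith

theorem stmt_9_general {m : ℕ} {n : Fin m → ℕ}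
    (X : ∀ i : Fin m, Set (EuclideanSpace ℝ (Fin (n i))))
    (Q : Matrix (JIdx m n) (JIdx m n) ℝ) (hQ : Q.PosSemidef)
    (q : JIdx m n → ℝ)
    (c : ℝ)
    (x : JVec m n) (hx : ∀ i, x i ∈ X i)
    (y : JVec m n)
    (hy : ∀ v : JVec m n, (∀ i, v i ∈ X i) →
      (flat y - flat x) ⬝ᵥ ((blockDiagPart Q + c • (1 : Matrix (JIdx m n) (JIdx m n) ℝ))
            *ᵥ (flat y - flat x))
          + (flat y - flat x) ⬝ᵥ ((2 : ℝ) • (Q *ᵥ flat x) + q) ≤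
        (flat v - flat x) ⬝ᵥ ((blockDiagPart Q + c • (1 : Matrix (JIdx m n) (JIdx m n) ℝ))
            *ᵥ (flat v - flat x))
          + (flat v - flat x) ⬝ᵥ ((2 : ℝ) • (Q *ᵥ flat x) + q)) :
    quadF Q q y ≤ quadF Q q x - (c - maxEig hQ.1) * ‖y - x‖ ^ 2 ∧
      (maxEig hQ.1 < c → quadF Q q y ≤ quadF Q q x) := by
  have hprox := hy x hx
  simp only [sub_self, zero_dotProduct, add_zero] at hprox
  have hdescent := quadF_le_sub_of_proximal_nonpos hQ q c x y hprox
  refine ⟨hdescent, fun hc => ?_⟩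
  have : 0 ≤ (c - maxEig hQ.1) * ‖y - x‖ ^ 2 := mul_nonneg (by linarith) (sq_nonneg _)
  linarith

/-- If `y ∈ X` minimizes `z ↦ (z − x)ᵀ(Q_d + cI)(z − x) + (z − x)ᵀ(2Qx + q)` over `X`,
then `f(y) ≤ f(x) − (c − λ_max(Q))‖y − x‖²`; in particular, if `c > λ_max(Q)` then
`f(y) ≤ f(x)`. -/
theorem stmt_9 {m : ℕ} {n : Fin m → ℕ} [Nonempty (JIdx m n)]
    (X : ∀ i : Fin m, Set (EuclideanSpace ℝ (Fin (n i))))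
    (hXne : ∀ i, (X i).Nonempty)
    (hXcpt : ∀ i, IsCompact (X i))
    (hXcvx : ∀ i, Convex ℝ (X i))
    (Q : Matrix (JIdx m n) (JIdx m n) ℝ) (hQ : Q.PosSemidef)
    (q : JIdx m n → ℝ)
    (c : ℝ) (hc : 0 < c)
    (x : JVec m n) (hx : ∀ i, x i ∈ X i)
    (y : JVec m n) (hyX : ∀ i, y i ∈ X i)
    (hy : ∀ v : JVec m n, (∀ i, v i ∈ X i) →
      (flat y - flat x) ⬝ᵥ ((blockDiagPart Q + c • (1 : Matrix (JIdx m n) (JIdx m n) ℝ))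
            *ᵥ (flat y - flat x))
          + (flat y - flat x) ⬝ᵥ ((2 : ℝ) • (Q *ᵥ flat x) + q) ≤
        (flat v - flat x) ⬝ᵥ ((blockDiagPart Q + c • (1 : Matrix (JIdx m n) (JIdx m n) ℝ))
            *ᵥ (flat v - flat x))
          + (flat v - flat x) ⬝ᵥ ((2 : ℝ) • (Q *ᵥ flat x) + q)) :
    quadF Q q y ≤ quadF Q q x - (c - maxEig hQ.1) * ‖y - x‖ ^ 2 ∧
      (maxEig hQ.1 < c → quadF Q q y ≤ quadF Q q x) :=
  stmt_9_general X Q hQ q c x hx y hy
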